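/- Let {Aᵢ : i ∈ I} be a family of non-trivial Abelian linearly ordered groups such that for each i ∈ I and each a ∈ Aᵢ with a > 0 there exists a₀ ∈ Aᵢ with 0 < a₀ < a. Let A = ∏_{i∈I} Aᵢ be endowed with the strict product ordering, and let G be a directed po-group with RDP. Then the lexicographic product A ×⃗ G satisfies RDP. -/

import Mathlib

/-!
A positive element of the lexicographic product `H ×ₗ G` has either a strictly positive
`H`-part, or `H`-part `0` and `G`-part in `G⁺`. Given `a₁ + a₂ = b₁ + b₂`, the matrix
`(a₁, 0, -a₁ + b₁, b₂)` is a Riesz decomposition as soon as `a₁ ≤ b₁`, and symmetrically when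
`b₁ ≤ a₁`; in the lexicographic order this settles every case except those where the `H`-parts
of `a₁, b₁` are both `0` or both strictly positive, and likewise for `a₂, b₂`. When all four are
`0` this is `RDP` in `G`. When one pair is `0` and the other strictly positive, directedness of `G`
lets us add a common `e` to the `G`-parts of the positive pair, decompose in `G`, and take `e` off
again in the corner whose `H`-part is strictly positive. When all four are strictly positive, the
`H`-parts admit a decomposition by strictly positive elements, to which any decomposition of the
`G`-parts may be attached. The strict product `∏ Aᵢ` has such strict decompositions componentwise,
because each `Aᵢ` is linearly ordered without a least strictly positive element.
-/

/-- A po-group satisfies RDP if every equation `a₁ + a₂ = b₁ + b₂` of positive elements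
admits a Riesz decomposition by four positive elements. -/
def RDP (G : Type*) [AddGroup G] [PartialOrder G] : Prop :=
  ∀ a₁ a₂ b₁ b₂ : G, 0 ≤ a₁ → 0 ≤ a₂ → 0 ≤ b₁ → 0 ≤ b₂ → a₁ + a₂ = b₁ + b₂ →
    ∃ c₁₁ c₁₂ c₂₁ c₂₂ : G, 0 ≤ c₁₁ ∧ 0 ≤ c₁₂ ∧ 0 ≤ c₂₁ ∧ 0 ≤ c₂₂ ∧
      a₁ = c₁₁ + c₁₂ ∧ a₂ = c₂₁ + c₂₂ ∧ b₁ = c₁₁ + c₂₁ ∧ b₂ = c₁₂ + c₂₂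

/-- The direct product `∏ i, A i` regarded with the strict product ordering. -/
def StrictPi {I : Type*} (A : I → Type*) : Type _ := ∀ i, A i

instance {I : Type*} (A : I → Type*) [∀ i, AddCommGroup (A i)] :
    AddCommGroup (StrictPi A) :=
  inferInstanceAs (AddCommGroup (∀ i, A i))

/-- The strict product ordering: `(aⁱ) ≦ (bⁱ)` iff `aⁱ = bⁱ` for all `i`, or
`aⁱ < bⁱ` for all `i`. -/
instance {I : Type*} (A : I → Type*) [∀ i, PartialOrder (A i)] :
    PartialOrder (StrictPi A) where
  le x y := x = y ∨ ∀ i, x i < y i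
  le_refl x := Or.inl rfl
  le_trans x y z hxy hyz := by
    rcases hxy with rfl | hxy
    · exact hyz
    · rcases hyz with rfl | hyz
      · exact Or.inr hxy
      · exact Or.inr fun i => lt_trans (hxy i) (hyz i)
  le_antisymm x y hxy hyx := by
    rcases hxy with rfl | hxy
    · rfl
    · rcases hyx with rfl | hyx
      · rfl
      · exact funext fun i => absurd (hyx i) (lt_asymm (hxy i))

section RieszDecomposition

variable {G : Type*}

def IsRieszDecomp [Add G] (a₁ a₂ b₁ b₂ c₁₁ c₁₂ c₂₁ c₂₂ : G) : Prop :=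
  a₁ = c₁₁ + c₁₂ ∧ a₂ = c₂₁ + c₂₂ ∧ b₁ = c₁₁ + c₂₁ ∧ b₂ = c₁₂ + c₂₂

variable [AddGroup G] {a₁ a₂ b₁ b₂ c₁₁ c₁₂ c₂₁ c₂₂ : G}

theorem IsRieszDecomp.symm (h : IsRieszDecomp a₁ a₂ b₁ b₂ c₁₁ c₁₂ c₂₁ c₂₂) :
    IsRieszDecomp b₁ b₂ a₁ a₂ c₁₁ c₂₁ c₁₂ c₂₂ :=
  ⟨h.2.2.1, h.2.2.2, h.1, h.2.1⟩

theorem isRieszDecomp_neg_add (h : a₁ + a₂ = b₁ + b₂) :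
    IsRieszDecomp a₁ a₂ b₁ b₂ a₁ 0 (-a₁ + b₁) b₂ := by
  refine ⟨(add_zero a₁).symm, ?_, (add_neg_cancel_left a₁ b₁).symm, (zero_add b₂).symm⟩
  rw [add_assoc, ← h, neg_add_cancel_left]

variable [PartialOrder G]

def HasRieszDecomp (a₁ a₂ b₁ b₂ : G) : Prop :=
  ∃ c₁₁ c₁₂ c₂₁ c₂₂ : G, 0 ≤ c₁₁ ∧ 0 ≤ c₁₂ ∧ 0 ≤ c₂₁ ∧ 0 ≤ c₂₂ ∧
    IsRieszDecomp a₁ a₂ b₁ b₂ c₁₁ c₁₂ c₂₁ c₂₂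

def StrictRDP (G : Type*) [AddGroup G] [PartialOrder G] : Prop :=
  ∀ a₁ a₂ b₁ b₂ : G, 0 < a₁ → 0 < a₂ → 0 < b₁ → 0 < b₂ → a₁ + a₂ = b₁ + b₂ →
    ∃ c₁₁ c₁₂ c₂₁ c₂₂ : G, 0 < c₁₁ ∧ 0 < c₁₂ ∧ 0 < c₂₁ ∧ 0 < c₂₂ ∧
      IsRieszDecomp a₁ a₂ b₁ b₂ c₁₁ c₁₂ c₂₁ c₂₂

theorem HasRieszDecomp.symm (h : HasRieszDecomp a₁ a₂ b₁ b₂) : HasRieszDecomp b₁ b₂ a₁ a₂ :=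
  let ⟨c₁₁, c₁₂, c₂₁, c₂₂, h₁₁, h₁₂, h₂₁, h₂₂, hc⟩ := h
  ⟨c₁₁, c₂₁, c₁₂, c₂₂, h₁₁, h₂₁, h₁₂, h₂₂, hc.symm⟩

theorem hasRieszDecomp_of_nonneg_neg_add (h : a₁ + a₂ = b₁ + b₂) (ha₁ : 0 ≤ a₁)
    (hb₂ : 0 ≤ b₂) (hab : 0 ≤ -a₁ + b₁) : HasRieszDecomp a₁ a₂ b₁ b₂ :=
  ⟨_, _, _, _, ha₁, le_rfl, hab, hb₂, isRieszDecomp_neg_add h⟩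

theorem RDP.exists_of_fst_nonneg [AddLeftMono G] (hG : RDP G)
    (hdir : ∀ x y : G, ∃ z, x ≤ z ∧ y ≤ z)
    (h : a₁ + a₂ = b₁ + b₂) (ha₁ : 0 ≤ a₁) (hb₁ : 0 ≤ b₁) :
    ∃ c₁₁ c₁₂ c₂₁ c₂₂ : G, 0 ≤ c₁₁ ∧ 0 ≤ c₁₂ ∧ 0 ≤ c₂₁ ∧
      IsRieszDecomp a₁ a₂ b₁ b₂ c₁₁ c₁₂ c₂₁ c₂₂ := by
  -- shift `a₂` and `b₂` into the positive cone by the same `e`, which is then taken off `c₂₂`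
  obtain ⟨e, hae, hbe⟩ := hdir (-a₂) (-b₂)
  obtain ⟨c₁₁, c₁₂, c₂₁, c₂₂, h₁₁, h₁₂, h₂₁, -, e₁, e₂, e₃, e₄⟩ :=
    hG a₁ (a₂ + e) b₁ (b₂ + e) ha₁ (neg_le_iff_add_nonneg'.1 hae) hb₁
      (neg_le_iff_add_nonneg'.1 hbe) (by rw [← add_assoc, ← add_assoc, h])
  refine ⟨c₁₁, c₁₂, c₂₁, c₂₂ + -e, h₁₁, h₁₂, h₂₁, e₁, ?_, e₃, ?_⟩
  · rw [← add_assoc, ← e₂, add_neg_cancel_right]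
  · rw [← add_assoc, ← e₄, add_neg_cancel_right]

theorem RDP.exists_of_snd_nonneg [AddRightMono G] (hG : RDP G)
    (hdir : ∀ x y : G, ∃ z, x ≤ z ∧ y ≤ z)
    (h : a₁ + a₂ = b₁ + b₂) (ha₂ : 0 ≤ a₂) (hb₂ : 0 ≤ b₂) :
    ∃ c₁₁ c₁₂ c₂₁ c₂₂ : G, 0 ≤ c₁₂ ∧ 0 ≤ c₂₁ ∧ 0 ≤ c₂₂ ∧
      IsRieszDecomp a₁ a₂ b₁ b₂ c₁₁ c₁₂ c₂₁ c₂₂ := by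
  obtain ⟨e, hae, hbe⟩ := hdir (-a₁) (-b₁)
  obtain ⟨c₁₁, c₁₂, c₂₁, c₂₂, -, h₁₂, h₂₁, h₂₂, e₁, e₂, e₃, e₄⟩ :=
    hG (e + a₁) a₂ (e + b₁) b₂ (neg_le_iff_add_nonneg.1 hae) ha₂
      (neg_le_iff_add_nonneg.1 hbe) hb₂ (by rw [add_assoc, add_assoc, h])
  refine ⟨-e + c₁₁, c₁₂, c₂₁, c₂₂, h₁₂, h₂₁, h₂₂, ?_, e₂, ?_, e₄⟩
  · rw [add_assoc, ← e₁, neg_add_cancel_left]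
  · rw [add_assoc, ← e₃, neg_add_cancel_left]

end RieszDecomposition

section Lex

variable {H G : Type*} [AddGroup H] [AddGroup G] {x₁ x₂ y₁ y₂ s : H} {g₁ g₂ h₁ h₂ : G}

theorem IsRieszDecomp.toLex {z₁₁ z₁₂ z₂₁ z₂₂ : H} {d₁₁ d₁₂ d₂₁ d₂₂ : G}
    (hz : IsRieszDecomp x₁ x₂ y₁ y₂ z₁₁ z₁₂ z₂₁ z₂₂)
    (hd : IsRieszDecomp g₁ g₂ h₁ h₂ d₁₁ d₁₂ d₂₁ d₂₂) :
    IsRieszDecomp (toLex (x₁, g₁)) (toLex (x₂, g₂)) (toLex (y₁, h₁)) (toLex (y₂, h₂))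
      (toLex (z₁₁, d₁₁)) (toLex (z₁₂, d₁₂)) (toLex (z₂₁, d₂₁)) (toLex (z₂₂, d₂₂)) := by
  obtain ⟨rfl, rfl, rfl, rfl⟩ := hz
  obtain ⟨rfl, rfl, rfl, rfl⟩ := hd
  exact ⟨rfl, rfl, rfl, rfl⟩

variable [PartialOrder H] [PartialOrder G]

theorem toLex_nonneg_iff {x : H} {g : G} : 0 ≤ toLex (x, g) ↔ 0 < x ∨ x = 0 ∧ 0 ≤ g := by
  rw [show (0 : H ×ₗ G) = toLex (0, 0) from rfl, Prod.Lex.toLex_le_toLex, eq_comm]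

theorem toLex_nonneg_of_pos {x : H} (hx : 0 < x) (g : G) : 0 ≤ toLex (x, g) :=
  toLex_nonneg_iff.2 (Or.inl hx)

theorem toLex_zero_nonneg {g : G} (hg : 0 ≤ g) : 0 ≤ toLex ((0 : H), g) :=
  toLex_nonneg_iff.2 (Or.inr ⟨rfl, hg⟩)

theorem hasRieszDecomp_toLex_of_pos_neg_add (hx : x₁ + x₂ = y₁ + y₂) (hg : g₁ + g₂ = h₁ + h₂)
    (ha₁ : 0 ≤ toLex (x₁, g₁)) (hb₂ : 0 ≤ toLex (y₂, h₂)) (hxy : 0 < -x₁ + y₁) :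
    HasRieszDecomp (toLex (x₁, g₁)) (toLex (x₂, g₂)) (toLex (y₁, h₁)) (toLex (y₂, h₂)) :=
  hasRieszDecomp_of_nonneg_neg_add (congrArg toLex (Prod.ext hx hg)) ha₁ hb₂
    (toLex_nonneg_of_pos hxy (-g₁ + h₁))

theorem hasRieszDecomp_toLex_of_pos (hH : StrictRDP H) (hx : x₁ + x₂ = y₁ + y₂)
    (hg : g₁ + g₂ = h₁ + h₂) (hx₁ : 0 < x₁) (hx₂ : 0 < x₂) (hy₁ : 0 < y₁) (hy₂ : 0 < y₂) :
    HasRieszDecomp (toLex (x₁, g₁)) (toLex (x₂, g₂)) (toLex (y₁, h₁)) (toLex (y₂, h₂)) := by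
  obtain ⟨z₁₁, z₁₂, z₂₁, z₂₂, h₁₁, h₁₂, h₂₁, h₂₂, hz⟩ := hH x₁ x₂ y₁ y₂ hx₁ hx₂ hy₁ hy₂ hx
  exact ⟨_, _, _, _, toLex_nonneg_of_pos h₁₁ _, toLex_nonneg_of_pos h₁₂ _,
    toLex_nonneg_of_pos h₂₁ _, toLex_nonneg_of_pos h₂₂ _, hz.toLex (isRieszDecomp_neg_add hg)⟩

theorem hasRieszDecomp_toLex_zero (hG : RDP G) (hg : g₁ + g₂ = h₁ + h₂) (hg₁ : 0 ≤ g₁)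
    (hg₂ : 0 ≤ g₂) (hh₁ : 0 ≤ h₁) (hh₂ : 0 ≤ h₂) :
    HasRieszDecomp (toLex ((0 : H), g₁)) (toLex ((0 : H), g₂)) (toLex ((0 : H), h₁))
      (toLex ((0 : H), h₂)) := by
  obtain ⟨d₁₁, d₁₂, d₂₁, d₂₂, h₁₁, h₁₂, h₂₁, h₂₂, hd⟩ := hG g₁ g₂ h₁ h₂ hg₁ hg₂ hh₁ hh₂ hg
  have hz : IsRieszDecomp (0 : H) 0 0 0 0 0 0 0 := by simp [IsRieszDecomp]
  exact ⟨_, _, _, _, toLex_zero_nonneg h₁₁, toLex_zero_nonneg h₁₂, toLex_zero_nonneg h₂₁,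
    toLex_zero_nonneg h₂₂, hz.toLex hd⟩

theorem hasRieszDecomp_toLex_zero_left [AddLeftMono G] (hG : RDP G)
    (hdir : ∀ x y : G, ∃ z, x ≤ z ∧ y ≤ z) (hs : 0 < s)
    (hg : g₁ + g₂ = h₁ + h₂) (hg₁ : 0 ≤ g₁) (hh₁ : 0 ≤ h₁) :
    HasRieszDecomp (toLex (0, g₁)) (toLex (s, g₂)) (toLex (0, h₁)) (toLex (s, h₂)) := by
  obtain ⟨d₁₁, d₁₂, d₂₁, d₂₂, h₁₁, h₁₂, h₂₁, hd⟩ := hG.exists_of_fst_nonneg hdir hg hg₁ hh₁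
  have hz : IsRieszDecomp 0 s 0 s 0 0 0 s := by simp [IsRieszDecomp]
  exact ⟨_, _, _, _, toLex_zero_nonneg h₁₁, toLex_zero_nonneg h₁₂, toLex_zero_nonneg h₂₁,
    toLex_nonneg_of_pos hs _, hz.toLex hd⟩

theorem hasRieszDecomp_toLex_zero_right [AddRightMono G] (hG : RDP G)
    (hdir : ∀ x y : G, ∃ z, x ≤ z ∧ y ≤ z) (hs : 0 < s)
    (hg : g₁ + g₂ = h₁ + h₂) (hg₂ : 0 ≤ g₂) (hh₂ : 0 ≤ h₂) :
    HasRieszDecomp (toLex (s, g₁)) (toLex (0, g₂)) (toLex (s, h₁)) (toLex (0, h₂)) := by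
  obtain ⟨d₁₁, d₁₂, d₂₁, d₂₂, h₁₂, h₂₁, h₂₂, hd⟩ := hG.exists_of_snd_nonneg hdir hg hg₂ hh₂
  have hz : IsRieszDecomp s 0 s 0 s 0 0 0 := by simp [IsRieszDecomp]
  exact ⟨_, _, _, _, toLex_nonneg_of_pos hs _, toLex_zero_nonneg h₁₂, toLex_zero_nonneg h₂₁,
    toLex_zero_nonneg h₂₂, hz.toLex hd⟩

theorem StrictRDP.rdp_lex [AddLeftMono G] [AddRightMono G] (hH : StrictRDP H)
    (hdir : ∀ x y : G, ∃ z, x ≤ z ∧ y ≤ z) (hG : RDP G) : RDP (H ×ₗ G) := by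
  rintro ⟨x₁, g₁⟩ ⟨x₂, g₂⟩ ⟨y₁, h₁⟩ ⟨y₂, h₂⟩ ha₁ ha₂ hb₁ hb₂ h
  obtain ⟨hx, hg⟩ : x₁ + x₂ = y₁ + y₂ ∧ g₁ + g₂ = h₁ + h₂ := Prod.ext_iff.1 h
  have hxy : -x₁ + y₁ = x₂ + -y₂ := by
    rw [neg_add_eq_iff_eq_add, ← add_assoc, hx, add_neg_cancel_right]
  have hyx : -y₁ + x₁ = y₂ + -x₂ := by
    rw [neg_add_eq_iff_eq_add, ← add_assoc, ← hx, add_neg_cancel_right]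
  have hle := hasRieszDecomp_toLex_of_pos_neg_add hx hg ha₁ hb₂
  have hge := fun hpos => (hasRieszDecomp_toLex_of_pos_neg_add hx.symm hg.symm hb₁ ha₂ hpos).symm
  rcases toLex_nonneg_iff.1 ha₁ with hx₁ | ⟨rfl, hg₁⟩ <;>
    rcases toLex_nonneg_iff.1 hb₁ with hy₁ | ⟨rfl, hh₁⟩
  · rcases toLex_nonneg_iff.1 ha₂ with hx₂ | ⟨rfl, hg₂⟩ <;>
      rcases toLex_nonneg_iff.1 hb₂ with hy₂ | ⟨rfl, hh₂⟩
    · exact hasRieszDecomp_toLex_of_pos hH hx hg hx₁ hx₂ hy₁ hy₂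
    · exact hle (by rwa [hxy, neg_zero, add_zero])
    · exact hge (by rwa [hyx, neg_zero, add_zero])
    · obtain rfl : x₁ = y₁ := by simpa using hx
      exact hasRieszDecomp_toLex_zero_right hG hdir hx₁ hg hg₂ hh₂
  · exact hge (by rwa [neg_zero, zero_add])
  · exact hle (by rwa [neg_zero, zero_add])
  · rcases toLex_nonneg_iff.1 ha₂ with hx₂ | ⟨rfl, hg₂⟩ <;>
      rcases toLex_nonneg_iff.1 hb₂ with hy₂ | ⟨rfl, hh₂⟩
    · obtain rfl : x₂ = y₂ := by simpa using hx
      exact hasRieszDecomp_toLex_zero_left hG hdir hx₂ hg hg₁ hh₁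
    · exact hle (by rwa [hxy, neg_zero, add_zero])
    · exact hge (by rwa [hyx, neg_zero, add_zero])
    · exact hasRieszDecomp_toLex_zero hG hg hg₁ hg₂ hh₁ hh₂

end Lex

theorem strictRDP_of_forall_exists_pos_lt {α : Type*} [AddCommGroup α] [LinearOrder α]
    [IsOrderedAddMonoid α] (hd : ∀ a : α, 0 < a → ∃ b, 0 < b ∧ b < a) : StrictRDP α := by
  intro a₁ a₂ b₁ b₂ ha₁ ha₂ hb₁ hb₂ h
  wlog hab : a₁ ≤ b₁ generalizing a₁ a₂ b₁ b₂
  · obtain ⟨c₁₁, c₁₂, c₂₁, c₂₂, h₁₁, h₁₂, h₂₁, h₂₂, hc⟩ :=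
      this b₁ b₂ a₁ a₂ hb₁ hb₂ ha₁ ha₂ h.symm (le_of_not_ge hab)
    exact ⟨c₁₁, c₂₁, c₁₂, c₂₂, h₁₁, h₂₁, h₁₂, h₂₂, hc.symm⟩
  -- shifting a small `ε` from `a₁` to `0` makes the decomposition `(a₁, 0, b₁ - a₁, b₂)` strict
  obtain ⟨ε, hε, hεlt⟩ := hd (min a₁ b₂) (lt_min ha₁ hb₂)
  have ha₂ : a₂ = b₁ + b₂ - a₁ := by rw [← h]; abel
  refine ⟨a₁ - ε, ε, b₁ - a₁ + ε, b₂ - ε, sub_pos.2 (hεlt.trans_le (min_le_left _ _)), hε,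
    add_pos_of_nonneg_of_pos (sub_nonneg.2 hab) hε, sub_pos.2 (hεlt.trans_le (min_le_right _ _)),
    by abel, by rw [ha₂]; abel, by abel, by abel⟩

namespace StrictPi

variable {I : Type*} {A : I → Type*}

theorem nonempty_of_lt [∀ i, PartialOrder (A i)] {x y : StrictPi A} (h : x < y) : Nonempty I := by
  by_contra hI
  rw [not_nonempty_iff] at hI
  exact h.ne (funext isEmptyElim)

theorem lt_iff [∀ i, PartialOrder (A i)] [Nonempty I] {x y : StrictPi A} :
    x < y ↔ ∀ i, x i < y i := by
  refine ⟨fun h => h.le.resolve_left h.ne, fun h => lt_of_le_of_ne (Or.inr h) fun hxy => ?_⟩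
  obtain ⟨i⟩ := ‹Nonempty I›
  exact (h i).ne (congrFun hxy i)

theorem strictRDP [∀ i, AddCommGroup (A i)] [∀ i, PartialOrder (A i)]
    (h : ∀ i, StrictRDP (A i)) : StrictRDP (StrictPi A) := by
  intro a₁ a₂ b₁ b₂ ha₁ ha₂ hb₁ hb₂ hab
  have := nonempty_of_lt ha₁
  rw [lt_iff] at ha₁ ha₂ hb₁ hb₂
  choose c₁₁ c₁₂ c₂₁ c₂₂ h₁₁ h₁₂ h₂₁ h₂₂ hc using
    fun i => h i _ _ _ _ (ha₁ i) (ha₂ i) (hb₁ i) (hb₂ i) (congrFun hab i)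
  exact ⟨c₁₁, c₁₂, c₂₁, c₂₂, lt_iff.2 h₁₁, lt_iff.2 h₁₂, lt_iff.2 h₂₁, lt_iff.2 h₂₂,
    funext fun i => (hc i).1, funext fun i => (hc i).2.1, funext fun i => (hc i).2.2.1,
    funext fun i => (hc i).2.2.2⟩

end StrictPi

theorem rdp_lex_strictPi_general {I : Type*} (A : I → Type*)
    [∀ i, AddCommGroup (A i)] [∀ i, LinearOrder (A i)] [∀ i, IsOrderedAddMonoid (A i)]
    (hdense : ∀ i, ∀ a : A i, 0 < a → ∃ a₀ : A i, 0 < a₀ ∧ a₀ < a)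
    {G : Type*} [AddGroup G] [PartialOrder G]
    [CovariantClass G G (· + ·) (· ≤ ·)]
    [CovariantClass G G (Function.swap (· + ·)) (· ≤ ·)]
    (hdir : ∀ x y : G, ∃ z : G, x ≤ z ∧ y ≤ z)
    (hG : RDP G) :
    RDP (StrictPi A ×ₗ G) :=
  (StrictPi.strictRDP fun i => strictRDP_of_forall_exists_pos_lt (hdense i)).rdp_lex hdir hG

/-- Let `{Aᵢ}` be a family of non-trivial Abelian linearly ordered groups
such that every strictly positive element of each `Aᵢ` dominates a strictly positive
element. Let `A = ∏ i, Aᵢ` carry the strict product ordering and let `G` be a directed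
po-group with RDP. Then the lexicographic product `A ×ₗ G` satisfies RDP. -/
theorem rdp_lex_strictPi {I : Type*} (A : I → Type*)
    [∀ i, AddCommGroup (A i)] [∀ i, LinearOrder (A i)] [∀ i, IsOrderedAddMonoid (A i)] [∀ i, Nontrivial (A i)]
    (hdense : ∀ i, ∀ a : A i, 0 < a → ∃ a₀ : A i, 0 < a₀ ∧ a₀ < a)
    {G : Type*} [AddGroup G] [PartialOrder G]
    [CovariantClass G G (· + ·) (· ≤ ·)]
    [CovariantClass G G (Function.swap (· + ·)) (· ≤ ·)]
    (hdir : ∀ x y : G, ∃ z : G, x ≤ z ∧ y ≤ z)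
    (hG : RDP G) :
    RDP (StrictPi A ×ₗ G) :=
  rdp_lex_strictPi_general A hdense hdir hG
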